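/- For every positive integer d, the generating function for the number of Schmidt type d-fold partition diamonds is given by ∑_{n≥0} s_d(n) q^n = ∏_{n≥1} A_d(q^n) / (1 - q^n)^{d+1}, as an identity of formal power series in q over ℤ, where A_d is the d-th Eulerian polynomial. -/

import Mathlib

/-!
Writing `c_m = a_{m-1} - a_m` for `m ≥ 1`, the links of a diamond are the parts of the
partition conjugate to the one with `c_m` parts equal to `m`, and each `b_{m,j}` ranges freely
over an interval of `c_m + 1` integers. Hence `s_d(n) = ∑_{λ ⊢ n} ∏_m (mult_m λ + 1)^d`, the
`n`-th coefficient of `∏_{m ≥ 1} ∑_{c ≥ 0} (c+1)^d q^{mc}` (`Nat.Partition.hasProd_genFun`).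
The Eulerian recurrence is exactly what makes `A_d(q) = (1-q)^{d+1} ∑_{c ≥ 0} (c+1)^d q^c`
(the operator `1 + q d/dq` multiplies the `q^c`-coefficient by `c + 1`), and substituting
`q ↦ q^m` turns each factor into `A_d(q^m) / (1-q^m)^{d+1}`.
-/

open Finset PowerSeries

/-- A `d`-fold partition diamond: nonnegative integers `a 0, a 1, …` together with
`b k j` (representing `b_{k+1, j+1}`) satisfying `a k ≥ b k j ≥ a (k+1)`,
with all but finitely many entries equal to zero. -/
structure DFold (d : ℕ) where
  a : ℕ → ℕ
  b : ℕ → Fin d → ℕ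
  upper : ∀ k j, b k j ≤ a k
  lower : ∀ k j, a (k + 1) ≤ b k j
  fin : ∃ N, ∀ k, N ≤ k → a k = 0

/-- `sFold d n`: the number of Schmidt type `d`-fold partition diamonds of `n`
(only the links `a k` are summed). -/
noncomputable def sFold (d n : ℕ) : ℕ :=
  Set.ncard {D : DFold d | (∑ᶠ k, D.a k) = n}

/-- The Eulerian polynomials: `A 0 = 1` and
`A d = (1 + (d-1) q) A (d-1) + q (1-q) (A (d-1))'` for `d ≥ 1`. -/
noncomputable def eulerian : ℕ → Polynomial ℤ
  | 0 => 1
  | e + 1 =>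
      (1 + (e : Polynomial ℤ) * Polynomial.X) * eulerian e +
        Polynomial.X * (1 - Polynomial.X) * Polynomial.derivative (eulerian e)

open scoped PowerSeries.WithPiTopology

lemma one_add_tsum_smul_X_pow_eq_expand {R : Type*} [CommRing R] [TopologicalSpace R] [T2Space R]
    {g : ℕ → R} (hg : g 0 = 1) {i : ℕ} (hi : i ≠ 0) :
    1 + ∑' j, g (j + 1) • (X : R⟦X⟧) ^ (i * (j + 1)) = expand i hi (mk g) := by
  ext n
  rw [map_add, (Nat.Partition.summable_genFun_term' (fun _ c => g c) hi).map_tsum _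
    (WithPiTopology.continuous_coeff R n), coeff_expand]
  simp only [coeff_smul, coeff_X_pow, coeff_one, coeff_mk, smul_eq_mul, mul_ite, mul_one, mul_zero]
  by_cases hn : ∃ c, n = i * (c + 1)
  · obtain ⟨c, rfl⟩ := hn
    rw [tsum_eq_single c fun j hj => if_neg fun h => hj (by simpa [hi] using h.symm), if_pos rfl,
      if_neg (by positivity), if_pos (dvd_mul_right _ _), Nat.mul_div_cancel_left _ (by omega),
      zero_add]
  · push Not at hn
    simp only [hn, if_false, tsum_zero, add_zero]
    rcases n with _ | n
    · simp [hg]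
    · rw [if_neg n.succ_ne_zero, if_neg]
      rintro ⟨_ | c, hc⟩
      · simp at hc
      · exact hn c hc

lemma trunc_expand_eq_one {R : Type*} [CommRing R] {φ : R⟦X⟧} (hφ : constantCoeff φ = 1)
    {p n : ℕ} (hp : p ≠ 0) (hnp : n < p) : trunc (n + 1) (expand p hp φ) = 1 := by
  ext k
  rw [coeff_trunc, Polynomial.coeff_one, coeff_expand]
  rcases Nat.eq_zero_or_pos k with rfl | hk
  · simpa using hφ
  · rw [if_neg hk.ne']
    split_ifs with hkn hdvd
    · exact absurd hdvd (Nat.not_dvd_of_pos_of_lt hk (by omega))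
    · rfl
    · rfl

lemma coeff_mul_eq_coeff_mul_of_coeff_eq {R : Type*} [Semiring R] {f g : R⟦X⟧} (h : R⟦X⟧)
    {n : ℕ} (hfg : ∀ k ≤ n, coeff k f = coeff k g) : coeff n (f * h) = coeff n (g * h) := by
  rw [coeff_mul, coeff_mul]
  refine sum_congr rfl fun x hx => ?_
  rw [HasAntidiagonal.mem_antidiagonal] at hx
  rw [hfg x.1 (by omega)]

lemma coeff_mul_of_trunc_eq_one {R : Type*} [CommSemiring R] {f g : R⟦X⟧} {n : ℕ}
    (hg : trunc (n + 1) g = 1) : coeff n (f * g) = coeff n f := by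
  rw [← coeff_coe_trunc_of_lt n.lt_succ_self, ← trunc_mul_trunc, hg, Polynomial.coe_one,
    mul_one, coeff_coe_trunc_of_lt n.lt_succ_self]

lemma trunc_prod_eq_one {R ι : Type*} [CommSemiring R] {s : Finset ι} {F : ι → R⟦X⟧}
    {n : ℕ} (hF : ∀ i ∈ s, trunc (n + 1) (F i) = 1) :
    trunc (n + 1) (∏ i ∈ s, F i) = 1 := by
  refine prod_induction F (fun f => trunc (n + 1) f = 1) (fun f g hf hg => ?_) (trunc_one n) hF
  rw [← trunc_trunc_mul_trunc, hf, hg, Polynomial.coe_one, mul_one, trunc_one]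

lemma HasProd.coeff_eq_coeff_prod_range {R : Type*} [CommSemiring R] [TopologicalSpace R]
    [T2Space R] {F : ℕ → R⟦X⟧} {G : R⟦X⟧} (hG : HasProd F G) {n N : ℕ}
    (htail : ∀ i, N ≤ i → trunc (n + 1) (F i) = 1) :
    coeff n G = coeff n (∏ i ∈ range N, F i) := by
  have hstable (s : Finset ℕ) (hs : range N ⊆ s) :
      coeff n (∏ i ∈ s, F i) = coeff n (∏ i ∈ range N, F i) := by
    rw [← prod_sdiff hs, mul_comm, coeff_mul_of_trunc_eq_one (trunc_prod_eq_one fun i hi => ?_)]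
    exact htail i (by simpa using (mem_sdiff.1 hi).2)
  refine tendsto_nhds_unique ((WithPiTopology.tendsto_iff_coeff_tendsto R _ _ _).1 hG n)
    (tendsto_const_nhds.congr' ?_)
  exact Filter.eventually_atTop.2 ⟨range N, fun s hs => (hstable s hs).symm⟩

lemma Finset.prod_Icc_one_eq_prod_range {M : Type*} [CommMonoid M] (f : ℕ → M) (N : ℕ) :
    ∏ m ∈ Icc 1 N, f m = ∏ i ∈ range N, f (i + 1) := by
  rw [range_eq_Ico, prod_Ico_add', zero_add, Finset.Ico_add_one_right_eq_Icc]

noncomputable def succPowSeries (d : ℕ) : ℤ⟦X⟧ :=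
  PowerSeries.mk fun c => ((c : ℤ) + 1) ^ d

lemma succPowSeries_succ (d : ℕ) :
    succPowSeries (d + 1) = succPowSeries d + X * d⁄dX ℤ (succPowSeries d) := by
  ext (_ | c)
  · simp [succPowSeries]
  · simp only [succPowSeries, pow_succ, coeff_mk, Nat.cast_add, Nat.cast_one, map_add,
      coeff_succ_X_mul, coeff_derivative]
    ring

lemma coe_eulerian (d : ℕ) : (eulerian d : ℤ⟦X⟧) = (1 - X) ^ (d + 1) * succPowSeries d := by
  induction d with
  | zero =>
    rw [eulerian, Polynomial.coe_one, pow_one, mul_comm]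
    exact (mk_one_mul_one_sub_eq_one ℤ).symm
  | succ d ih =>
    have hderiv : ((Polynomial.derivative (eulerian d) : Polynomial ℤ) : ℤ⟦X⟧) =
        (1 - X) ^ (d + 1) * d⁄dX ℤ (succPowSeries d) -
          ((d : ℤ⟦X⟧) + 1) * (1 - X) ^ d * succPowSeries d := by
      rw [← derivative_coe, ih, Derivation.leibniz, Derivation.leibniz_pow, map_sub,
        Derivation.map_one_eq_zero, derivative_X]
      simp only [smul_eq_mul, nsmul_eq_mul, Nat.add_sub_cancel]
      push_cast
      ring
    have hcast : ((d : Polynomial ℤ) : ℤ⟦X⟧) = d :=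
      map_natCast Polynomial.coeToPowerSeries.ringHom d
    rw [succPowSeries_succ, eulerian]
    push_cast
    rw [hderiv, ih, hcast]
    ring

lemma aeval_X_pow_eulerian (d : ℕ) {m : ℕ} (hm : m ≠ 0) :
    Polynomial.aeval ((X : ℤ⟦X⟧) ^ m) (eulerian d) =
      (1 - X ^ m) ^ (d + 1) * expand m hm (succPowSeries d) := by
  rw [← subst_coe (HasSubst.X_pow hm), ← expand_apply m hm, coe_eulerian]
  simp

namespace Multiset

lemma countP_lt_eq_countP_succ_lt_add_count (s : Multiset ℕ) (k : ℕ) :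
    s.countP (k < ·) = s.countP (k + 1 < ·) + s.count (k + 1) := by
  induction s using Multiset.induction_on with
  | empty => simp
  | cons x s ih =>
    simp only [countP_cons, count_cons, ih]
    split_ifs <;> omega

lemma sum_range_countP_lt {s : Multiset ℕ} {M : ℕ} (hs : ∀ x ∈ s, x ≤ M) :
    ∑ k ∈ Finset.range M, s.countP (k < ·) = s.sum := by
  induction s using Multiset.induction_on with
  | empty => simp
  | cons x s ih =>
    have hx : (Finset.range M).filter (· < x) = Finset.range x := by
      ext k
      simp only [Finset.mem_filter, Finset.mem_range]
      have := hs x (mem_cons_self x s)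
      omega
    simp only [countP_cons, Finset.sum_add_distrib, sum_cons,
      ih fun y hy => hs y (mem_cons_of_mem hy)]
    rw [Finset.sum_boole, hx, Finset.card_range, Nat.cast_id, add_comm]

lemma finsum_countP_lt (s : Multiset ℕ) : ∑ᶠ k, s.countP (k < ·) = s.sum := by
  rw [finsum_eq_sum_of_support_subset (s := Finset.range s.sum),
    sum_range_countP_lt fun _ hx => le_sum_of_mem hx]
  intro k hk
  obtain ⟨x, hx, hkx⟩ := countP_pos.1 (Nat.pos_of_ne_zero hk)
  simpa using hkx.trans_le (le_sum_of_mem hx)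

lemma countP_lt_sum_replicate {a : ℕ → ℕ} (ha : Antitone a) (K j : ℕ) :
    (∑ k ∈ Finset.range K, replicate (a k - a (k + 1)) (k + 1)).countP (j < ·) =
      a (min j K) - a K := by
  induction K with
  | zero => simp
  | succ K ih =>
    have hrep : (replicate (a K - a (K + 1)) (K + 1)).countP (j < ·) =
        if j < K + 1 then a K - a (K + 1) else 0 := by
      split_ifs with hj
      · rw [countP_eq_card.2 fun x hx => (eq_of_mem_replicate hx).symm ▸ hj, card_replicate]
      · exact countP_eq_zero.2 fun x hx => (eq_of_mem_replicate hx).symm ▸ hj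
    rw [Finset.sum_range_succ, countP_add, ih, hrep]
    have := ha (Nat.le_add_right K 1)
    split_ifs with hj
    · rw [min_eq_left (by omega), min_eq_left (by omega)]
      have := ha (show j ≤ K by omega)
      omega
    · rw [min_eq_right (by omega), min_eq_right (by omega)]
      omega

lemma exists_countP_lt_eq {a : ℕ → ℕ} (ha : Antitone a) {K : ℕ} (hK : a K = 0) :
    ∃ s : Multiset ℕ, 0 ∉ s ∧ ∀ k, s.countP (k < ·) = a k := by
  refine ⟨∑ k ∈ Finset.range K, replicate (a k - a (k + 1)) (k + 1), fun h => ?_,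
    fun j => ?_⟩
  · obtain ⟨k, -, hk⟩ := mem_sum.1 h
    exact absurd (eq_of_mem_replicate hk) k.succ_ne_zero.symm
  · rw [countP_lt_sum_replicate ha, hK, Nat.sub_zero]
    rcases le_total j K with h | h
    · rw [min_eq_left h]
    · rw [min_eq_right h, hK, eq_comm, ← Nat.le_zero, ← hK]
      exact ha h

lemma eq_of_countP_lt_eq {s t : Multiset ℕ} (hs : 0 ∉ s) (ht : 0 ∉ t)
    (h : ∀ k, s.countP (k < ·) = t.countP (k < ·)) : s = t := by
  ext (_ | k)
  · rw [count_eq_zero.2 hs, count_eq_zero.2 ht]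
  · have hk := h k
    rw [countP_lt_eq_countP_succ_lt_add_count, countP_lt_eq_countP_succ_lt_add_count t,
      h (k + 1)] at hk
    omega

end Multiset

attribute [ext] DFold

namespace DFold

variable {d : ℕ}

lemma antitone_a (hd : 1 ≤ d) (D : DFold d) : Antitone D.a :=
  antitone_nat_of_succ_le fun k => (D.lower k ⟨0, hd⟩).trans (D.upper k ⟨0, hd⟩)

/-- Beyond `K` the vanishing links force `b k j = 0`, so only the first `K` rows are free. -/
noncomputable def linksEquiv (a : ℕ → ℕ) {K : ℕ} (hK : ∀ k, K ≤ k → a k = 0) :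
    {D : DFold d // D.a = a} ≃ ((k : Fin K) → Fin d → Finset.Icc (a (k + 1)) (a k)) where
  toFun D k j := ⟨D.1.b k j, Finset.mem_Icc.2
    ⟨(congrFun D.2 _).ge.trans (D.1.lower k j), (D.1.upper k j).trans (congrFun D.2 _).le⟩⟩
  invFun b :=
    ⟨{ a := a
       b := fun k j => if h : k < K then b ⟨k, h⟩ j else 0
       upper := fun k j => by
         split_ifs with h
         · exact (Finset.mem_Icc.1 (b ⟨k, h⟩ j).2).2
         · exact Nat.zero_le _
       lower := fun k j => by
         split_ifs with h
         · exact (Finset.mem_Icc.1 (b ⟨k, h⟩ j).2).1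
         · exact (hK (k + 1) (by omega)).le
       fin := ⟨K, hK⟩ }, rfl⟩
  left_inv := by
    rintro ⟨D, rfl⟩
    ext : 2
    · rfl
    · funext k j
      dsimp only
      split_ifs with h
      · rfl
      · have := D.upper k j
        have := hK k (by omega)
        omega
  right_inv b := by
    ext k j : 2
    simp

lemma card_links_eq (a : ℕ → ℕ) {K : ℕ} (hK : ∀ k, K ≤ k → a k = 0) :
    Nat.card {D : DFold d // D.a = a} = ∏ k ∈ range K, (a k + 1 - a (k + 1)) ^ d := by
  rw [Nat.card_congr (linksEquiv a hK), Nat.card_pi, ← Fin.prod_univ_eq_prod_range]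
  refine Finset.prod_congr rfl fun k _ => ?_
  rw [Nat.card_fun, Nat.card_eq_fintype_card, Fintype.card_coe, Nat.card_Icc, Nat.card_fin]

end DFold

namespace Nat.Partition

variable {n : ℕ}

/-- `p.conjugatePart k` is the number of parts of `p` exceeding `k`, i.e. the `(k+1)`-st largest
part of the conjugate partition. -/
def conjugatePart (p : n.Partition) (k : ℕ) : ℕ :=
  p.parts.countP (k < ·)

lemma conjugatePart_eq_zero (p : n.Partition) {k : ℕ} (hk : n ≤ k) : p.conjugatePart k = 0 :=
  Multiset.countP_eq_zero.2 fun _ hx => not_lt.2 ((le_of_mem_parts hx).trans hk)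

lemma finsum_conjugatePart (p : n.Partition) : ∑ᶠ k, p.conjugatePart k = n :=
  (Multiset.finsum_countP_lt p.parts).trans p.parts_sum

lemma conjugatePart_injective : Function.Injective (conjugatePart (n := n)) := fun p q h =>
  Nat.Partition.ext <| Multiset.eq_of_countP_lt_eq (fun h0 => (p.parts_pos h0).ne rfl)
    (fun h0 => (q.parts_pos h0).ne rfl) (congrFun h)

lemma exists_conjugatePart_eq {a : ℕ → ℕ} (ha : Antitone a) {K : ℕ} (hK : a K = 0)
    (hsum : ∑ᶠ k, a k = n) : ∃ p : n.Partition, p.conjugatePart = a := by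
  obtain ⟨s, hs0, hs⟩ := Multiset.exists_countP_lt_eq ha hK
  refine ⟨⟨s, fun hi => Nat.pos_of_ne_zero fun h => hs0 (h ▸ hi), ?_⟩, funext hs⟩
  rw [← Multiset.finsum_countP_lt, ← hsum]
  exact finsum_congr hs

lemma card_dfold_conjugatePart {d : ℕ} (p : n.Partition) :
    Nat.card {D : DFold d // D.a = p.conjugatePart} =
      ∏ i ∈ p.parts.toFinset, (p.parts.count i + 1) ^ d := by
  rw [DFold.card_links_eq _ fun _ => p.conjugatePart_eq_zero]
  have hstep (k : ℕ) :
      p.conjugatePart k + 1 - p.conjugatePart (k + 1) = p.parts.count (k + 1) + 1 := by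
    have := p.parts.countP_lt_eq_countP_succ_lt_add_count k
    unfold conjugatePart
    omega
  simp only [hstep, ← Finset.prod_Icc_one_eq_prod_range (fun i => (p.parts.count i + 1) ^ d)]
  refine (prod_subset (fun i hi => ?_) fun i _ hi => ?_).symm
  · rw [Multiset.mem_toFinset] at hi
    have := p.parts_pos hi
    have := le_of_mem_parts hi
    simp only [mem_Icc]
    omega
  · rw [Multiset.count_eq_zero.2 (by simpa using hi), zero_add, one_pow]

end Nat.Partition

open Nat.Partition in
lemma sFold_eq_sum_card {d : ℕ} (hd : 1 ≤ d) (n : ℕ) :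
    sFold d n = ∑ p : n.Partition, Nat.card {D : DFold d // D.a = p.conjugatePart} := by
  let e : (Σ p : n.Partition, {D : DFold d // D.a = p.conjugatePart}) →
      {D : DFold d | ∑ᶠ k, D.a k = n} :=
    fun x => ⟨x.2.1, by rw [Set.mem_ofPred_eq, x.2.2, finsum_conjugatePart]⟩
  have he : e.Bijective := by
    refine ⟨fun x y hxy => ?_, fun D => ?_⟩
    · have hD : x.2.1 = y.2.1 := congrArg Subtype.val hxy
      refine Sigma.subtype_ext (conjugatePart_injective ?_) hD
      rw [← x.2.2, ← y.2.2, hD]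
    · obtain ⟨K, hK⟩ := D.1.fin
      obtain ⟨p, hp⟩ := exists_conjugatePart_eq (D.1.antitone_a hd) (hK K le_rfl) D.2
      exact ⟨⟨p, D.1, hp.symm⟩, rfl⟩
  have (p : n.Partition) : Finite {D : DFold d // D.a = p.conjugatePart} :=
    Finite.of_equiv _ (DFold.linksEquiv _ fun _ => p.conjugatePart_eq_zero).symm
  rw [sFold, ← Nat.card_coe_set_eq, ← Nat.card_congr (Equiv.ofBijective e he), Nat.card_sigma]

lemma coeff_genFun_eq_sFold {d : ℕ} (hd : 1 ≤ d) (n : ℕ) :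
    coeff n (Nat.Partition.genFun fun _ c => ((c : ℤ) + 1) ^ d) = sFold d n := by
  rw [Nat.Partition.coeff_genFun, sFold_eq_sum_card hd, Nat.cast_sum]
  refine sum_congr rfl fun p _ => ?_
  rw [Nat.Partition.card_dfold_conjugatePart]
  simp [Finsupp.prod]

lemma coeff_genFun_eq_coeff_prod_expand (d : ℕ) {n N : ℕ} (hnN : n ≤ N) :
    coeff n (Nat.Partition.genFun fun _ c => ((c : ℤ) + 1) ^ d) =
      coeff n (∏ i ∈ range N, expand (i + 1) i.succ_ne_zero (succPowSeries d)) := by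
  have hprod : HasProd (fun i => expand (i + 1) i.succ_ne_zero (succPowSeries d))
      (Nat.Partition.genFun fun _ c => ((c : ℤ) + 1) ^ d) := by
    convert Nat.Partition.hasProd_genFun fun _ c => ((c : ℤ) + 1) ^ d using 1
    · rfl -- `CommMonoid ℤ⟦X⟧` reached via `CommRing` vs. via `CommSemiring`
    · funext i
      exact (one_add_tsum_smul_X_pow_eq_expand (g := fun c => ((c : ℤ) + 1) ^ d) (by simp) _).symm
  exact hprod.coeff_eq_coeff_prod_range fun i hi =>
    trunc_expand_eq_one (by simp [succPowSeries]) _ (by omega)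

/-- Both sides of the infinite-product identity, after clearing denominators, have `n`-th
coefficient equal to that of the partial product over the first `N ≥ n` factors, since every
further factor is `1 + O(q^{N+1})`. -/
theorem schmidt_dfold_generating_function (d : ℕ) (hd : 1 ≤ d)
    (n N : ℕ) (hnN : n ≤ N) :
    PowerSeries.coeff (R := ℤ) n
        ((PowerSeries.mk fun m => (sFold d m : ℤ)) *
          ∏ m ∈ Finset.Icc 1 N, (1 - (X : ℤ⟦X⟧) ^ m) ^ (d + 1)) =
      PowerSeries.coeff (R := ℤ) n
        (∏ m ∈ Finset.Icc 1 N, Polynomial.aeval ((X : ℤ⟦X⟧) ^ m) (eulerian d)) := by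
  have hfactor : ∏ m ∈ Icc 1 N, Polynomial.aeval ((X : ℤ⟦X⟧) ^ m) (eulerian d) =
      (∏ i ∈ range N, expand (i + 1) i.succ_ne_zero (succPowSeries d)) *
        ∏ m ∈ Icc 1 N, (1 - (X : ℤ⟦X⟧) ^ m) ^ (d + 1) := by
    simp only [prod_Icc_one_eq_prod_range, ← prod_mul_distrib]
    exact prod_congr rfl fun i _ => (aeval_X_pow_eulerian d i.succ_ne_zero).trans (mul_comm _ _)
  rw [hfactor]
  refine coeff_mul_eq_coeff_mul_of_coeff_eq _ fun k hk => ?_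
  rw [coeff_mk, ← coeff_genFun_eq_sFold hd, coeff_genFun_eq_coeff_prod_expand d (hk.trans hnN)]
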